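/- arXiv:2505.08727 — 2 statements merged into one kernel-verified Lean document; each statement's English description precedes it below -/
import Mathlib

section
/- Let X be a discrete random variable on a finite sample space Ω with |Ω| = n, and suppose there exists α ∈ (0, 1/n] such that P(X = x) ≥ α for all x ∈ Ω. Then the Shannon entropy satisfies H(X) ≥ -(1 - α(n-1))·log₂(1 - α(n-1)) - (n-1)·α·log₂(α). -/
/-!
Each `p x` lies in `[α, M]` with `M = 1 - α (n - 1)`, because the other `n - 1` outcomes carry
mass at least `α` each. On that interval the concave function `t ↦ -t log₂ t` lies above its
chord, and summing the chord values over all outcomes with `∑ p x = (n - 1) α + M` gives exactly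
the entropy of the extreme distribution `(α, …, α, M)`.
-/

open Finset

/-- Shannon entropy (base 2) of a finitely supported probability mass function. -/
noncomputable def shannonEntropy {Ω : Type*} [Fintype Ω] (p : Ω → ℝ) : ℝ :=
  -∑ x, p x * Real.logb 2 (p x)

open Set

theorem concaveOn_neg_mul_logb {b : ℝ} (hb : 1 ≤ b) :
    ConcaveOn ℝ (Ici 0) fun t => -(t * Real.logb b t) := by
  have h : (fun t => -(t * Real.logb b t)) = fun t => (Real.log b)⁻¹ • Real.negMulLog t := by
    ext t
    simp only [Real.negMulLog, Real.logb, smul_eq_mul]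
    ring
  exact h ▸ Real.concaveOn_negMulLog.smul (inv_nonneg.mpr (Real.log_nonneg hb))

/-- For `a = b` the slope is the junk value `0`, harmless since then `t = a`. -/
theorem ConcaveOn.secant_le {f : ℝ → ℝ} {a b t : ℝ} (hf : ConcaveOn ℝ (Icc a b) f)
    (ht : t ∈ Icc a b) : f a + (t - a) / (b - a) * (f b - f a) ≤ f t := by
  obtain ⟨hat, htb⟩ := ht
  rcases (hat.trans htb).eq_or_lt with rfl | hab
  · obtain rfl : t = a := le_antisymm htb hat
    simp
  have key := hf.2 (left_mem_Icc.mpr hab.le) (right_mem_Icc.mpr hab.le)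
    (div_nonneg (sub_nonneg.mpr htb) (sub_pos.mpr hab).le)
    (div_nonneg (sub_nonneg.mpr hat) (sub_pos.mpr hab).le)
    (by field_simp; ring)
  have hcomb : (b - t) / (b - a) * a + (t - a) / (b - a) * b = t := by
    field_simp; ring
  simp only [smul_eq_mul, hcomb] at key
  calc f a + (t - a) / (b - a) * (f b - f a)
      = (b - t) / (b - a) * f a + (t - a) / (b - a) * f b := by field_simp; ring
    _ ≤ f t := key

theorem ConcaveOn.card_sub_one_mul_add_le_sum {ι : Type*} [Fintype ι] {f : ℝ → ℝ} {a b : ℝ}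
    (hf : ConcaveOn ℝ (Icc a b) f) {p : ι → ℝ} (hp : ∀ i, p i ∈ Icc a b)
    (hsum : ∑ i, p i = (Fintype.card ι - 1) * a + b) :
    (Fintype.card ι - 1) * f a + f b ≤ ∑ i, f (p i) := by
  have hexcess : ∑ i, (p i - a) = b - a := by
    rw [sum_sub_distrib, hsum, sum_const, card_univ, nsmul_eq_mul]; ring
  have hslope : (b - a) / (b - a) * (f b - f a) = f b - f a := by
    rcases eq_or_ne (b - a) 0 with h | h
    · rw [sub_eq_zero.mp h]; simp
    · rw [div_self h, one_mul]
  calc (Fintype.card ι - 1) * f a + f b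
      = ∑ i, (f a + (p i - a) / (b - a) * (f b - f a)) := by
        rw [sum_add_distrib, ← sum_mul, ← sum_div, hexcess, hslope, sum_const, card_univ,
          nsmul_eq_mul]
        ring
    _ ≤ ∑ i, f (p i) := sum_le_sum fun i _ => hf.secant_le (hp i)

theorem le_sum_sub_card_mul_of_forall_le {ι : Type*} [Fintype ι] {p : ι → ℝ} {a : ℝ}
    (h : ∀ i, a ≤ p i) (i : ι) : p i ≤ ∑ j, p j - (Fintype.card ι - 1) * a := by
  have := single_le_sum (fun j _ => sub_nonneg.mpr (h j)) (mem_univ i)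
  rw [sum_sub_distrib, sum_const, card_univ, nsmul_eq_mul] at this
  linarith

theorem min_prob_entropy_bound_general {Ω : Type*} [Fintype Ω] (p : Ω → ℝ) (n : ℕ)
    (hn : Fintype.card Ω = n)
    (hp1 : ∑ x, p x = 1)
    (α : ℝ) (hα0 : 0 < α)
    (hmin : ∀ x, α ≤ p x) :
    shannonEntropy p ≥
      -((1 - α * (n - 1)) * Real.logb 2 (1 - α * (n - 1)))
        - (n - 1) * α * Real.logb 2 α := by
  have hconc : ConcaveOn ℝ (Icc α (1 - α * (n - 1))) fun t => -(t * Real.logb 2 t) :=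
    (concaveOn_neg_mul_logb one_le_two).subset
      (Icc_subset_Ici_self.trans (Ici_subset_Ici.mpr hα0.le)) (convex_Icc _ _)
  have hp : ∀ x, p x ∈ Icc α (1 - α * (n - 1)) := fun x =>
    ⟨hmin x, by simpa [hp1, hn, mul_comm] using le_sum_sub_card_mul_of_forall_le hmin x⟩
  have hbound := hconc.card_sub_one_mul_add_le_sum hp (by rw [hp1, hn]; ring)
  rw [hn] at hbound
  rw [ge_iff_le, shannonEntropy, ← sum_neg_distrib]
  linarith

/-- **Minimum Probability Entropy Bound.** If every outcome of a discrete random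
variable on a sample space of size `n` has probability at least `α ∈ (0, 1/n]`,
then `H(X) ≥ -(1 - α(n-1)) log₂ (1 - α(n-1)) - (n-1) α log₂ α`. -/
theorem min_prob_entropy_bound {Ω : Type*} [Fintype Ω] (p : Ω → ℝ) (n : ℕ)
    (hn : Fintype.card Ω = n)
    (hp0 : ∀ x, 0 ≤ p x) (hp1 : ∑ x, p x = 1)
    (α : ℝ) (hα0 : 0 < α) (hα1 : α ≤ 1 / n)
    (hmin : ∀ x, α ≤ p x) :
    shannonEntropy p ≥
      -((1 - α * (n - 1)) * Real.logb 2 (1 - α * (n - 1)))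
        - (n - 1) * α * Real.logb 2 α :=
  min_prob_entropy_bound_general p n hn hp1 α hα0 hmin
end

section
/- Let X be a discrete random variable with finite support of size n ≥ 2 and minimum probability α ∈ (0, 1/n]. Among all probability distributions on n outcomes with every probability ≥ α, the entropy is minimized by the distribution P(x₁) = 1 - α(n-1), P(xᵢ) = α for i ≥ 2. -/
open Finset

/-!
Every `q i` lies in `[α, 1 - (n - 1) α]`, because the other `n - 1` coordinates are at least `α`.
On that interval the concave function `t ↦ -t log t` lies above its chord, and summing the chord
inequality over `i` only involves `∑ i, q i = 1`; the result is exactly the entropy of the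
distribution sitting at the two endpoints `1 - (n - 1) α` (once) and `α` (`n - 1` times).
-/

lemma shannonEntropy_eq_sum_negMulLog_div {Ω : Type*} [Fintype Ω] (p : Ω → ℝ) :
    shannonEntropy p = (∑ x, Real.negMulLog (p x)) / Real.log 2 := by
  simp only [shannonEntropy, Real.negMulLog, Real.logb, sum_div, ← sum_neg_distrib]
  congr 1 with x
  ring

lemma ConcaveOn.sub_mul_add_sub_mul_le {s : Set ℝ} {f : ℝ → ℝ} (hf : ConcaveOn ℝ s f)
    {a b x : ℝ} (ha : a ∈ s) (hb : b ∈ s) (hax : a ≤ x) (hxb : x ≤ b) :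
    (b - x) * f a + (x - a) * f b ≤ (b - a) * f x := by
  rcases (hax.trans hxb).eq_or_lt with rfl | hab
  · obtain rfl : x = a := le_antisymm hxb hax
    simp
  have hba : 0 < b - a := sub_pos.2 hab
  have hx : (b - x) / (b - a) * a + (x - a) / (b - a) * b = x := by
    field_simp; ring
  have hconc := hf.2 ha hb (div_nonneg (sub_nonneg.2 hxb) hba.le)
    (div_nonneg (sub_nonneg.2 hax) hba.le) (by field_simp; ring)
  simp only [smul_eq_mul, hx] at hconc
  calc (b - x) * f a + (x - a) * f b
      = (b - a) * ((b - x) / (b - a) * f a + (x - a) / (b - a) * f b) := by field_simp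
    _ ≤ (b - a) * f x := mul_le_mul_of_nonneg_left hconc hba.le

lemma ConcaveOn.mul_add_mul_le_sum {ι : Type*} [Fintype ι] {s : Set ℝ} {f : ℝ → ℝ}
    (hf : ConcaveOn ℝ s f) {a b k : ℝ} (ha : a ∈ s) (hb : b ∈ s) (hab : a ≤ b) {x : ι → ℝ}
    (hx : ∀ i, x i ∈ Set.Icc a b) (hsum : ∑ i, x i = k * b + (Fintype.card ι - k) * a) :
    k * f b + (Fintype.card ι - k) * f a ≤ ∑ i, f (x i) := by
  rcases hab.eq_or_lt with rfl | hab
  · have hxa : ∀ i, x i = a := fun i => le_antisymm (hx i).2 (hx i).1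
    simp only [hxa, sum_const, card_univ, nsmul_eq_mul]
    linarith
  have hchord : ∑ i, ((b - x i) * f a + (x i - a) * f b) ≤ ∑ i, (b - a) * f (x i) :=
    sum_le_sum fun i _ => hf.sub_mul_add_sub_mul_le ha hb (hx i).1 (hx i).2
  have hlhs : ∑ i, ((b - x i) * f a + (x i - a) * f b)
      = (b - a) * (k * f b + (Fintype.card ι - k) * f a) := by
    simp only [sum_add_distrib, ← sum_mul, sum_sub_distrib, hsum, sum_const, card_univ,
      nsmul_eq_mul]
    ring
  rw [hlhs, ← mul_sum] at hchord
  exact le_of_mul_le_mul_left hchord (sub_pos.2 hab)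

lemma add_card_sub_one_mul_le_sum {ι : Type*} [Fintype ι] {x : ι → ℝ} {a : ℝ}
    (hx : ∀ i, a ≤ x i) (i : ι) : x i + (Fintype.card ι - 1) * a ≤ ∑ j, x j := by
  classical
  rw [← add_sum_erase _ _ (mem_univ i)]
  have hrest := card_nsmul_le_sum (univ.erase i) x a fun j _ => hx j
  rw [card_erase_of_mem (mem_univ i), card_univ, nsmul_eq_mul,
    Nat.cast_sub (Fintype.card_pos_iff.2 ⟨i⟩), Nat.cast_one] at hrest
  linarith

theorem entropy_min_at_vertex_general (n : ℕ)
    (α : ℝ) (hα0 : 0 < α)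
    (q : Fin n → ℝ) (hq1 : ∑ i, q i = 1)
    (hqα : ∀ i, α ≤ q i) :
    shannonEntropy (fun i : Fin n => if (i : ℕ) = 0 then 1 - α * (n - 1) else α) ≤
      shannonEntropy q := by
  obtain ⟨m, rfl⟩ : ∃ m, n = m + 1 :=
    Nat.exists_eq_succ_of_ne_zero fun h => by subst h; simp at hq1
  have hq_le : ∀ i, q i ≤ 1 - α * m := fun i => by
    have hsum := add_card_sub_one_mul_le_sum hqα i
    simp only [Fintype.card_fin, hq1, Nat.cast_add, Nat.cast_one] at hsum
    linarith
  have hα_le : α ≤ 1 - α * m := (hqα 0).trans (hq_le 0)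
  have hmin := Real.concaveOn_negMulLog.mul_add_mul_le_sum (k := 1) hα0.le
    (hα0.le.trans hα_le) hα_le (fun i => ⟨hqα i, hq_le i⟩)
    (by rw [hq1, Fintype.card_fin]; push_cast; ring)
  rw [shannonEntropy_eq_sum_negMulLog_div, shannonEntropy_eq_sum_negMulLog_div]
  refine div_le_div_of_nonneg_right ?_ (Real.log_nonneg one_le_two)
  simpa [Fin.sum_univ_succ] using hmin

/-- Among all probability distributions on `n ≥ 2` outcomes in which every
outcome has probability at least `α ∈ (0, 1/n]`, the entropy is minimized by
the distribution assigning `1 - α(n-1)` to one outcome and `α` to the others. -/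
theorem entropy_min_at_vertex (n : ℕ) (hn : 2 ≤ n)
    (α : ℝ) (hα0 : 0 < α) (hα1 : α ≤ 1 / n)
    (q : Fin n → ℝ) (hq0 : ∀ i, 0 ≤ q i) (hq1 : ∑ i, q i = 1)
    (hqα : ∀ i, α ≤ q i) :
    shannonEntropy (fun i : Fin n => if (i : ℕ) = 0 then 1 - α * (n - 1) else α) ≤
      shannonEntropy q :=
  entropy_min_at_vertex_general n α hα0 q hq1 hqα
end
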